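/- arXiv:1607.08202 — 3 statements merged into one kernel-verified Lean document; each statement's English description precedes it below -/
import Mathlib

section
/- Let ρ(x) = (−7 − 9^x + 4^{x+1}) / (2(4 − 4^x)) for x ∈ (0,1). Then ρ is strictly increasing on (0,1); equivalently, its derivative ρ'(x) = (−4·9^x·ln 9 + 9·4^x·ln 4 + 36^x·ln(9/4)) / (2(4 − 4^x)^2) is strictly positive for every x ∈ (0,1). -/
/-!
With `t = 1 - x`, the numerator of `ρ'` equals `4 ^ x 9 ^ x (log 4 (9 ^ t - 1) - log 9 (4 ^ t - 1))`.
Since `9 ^ t = (4 ^ t) ^ p` with `p = log 9 / log 4 > 1`, Bernoulli's inequality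
`(1 + s) ^ p > 1 + p s` for `s = 4 ^ t - 1 ≠ 0` makes the bracket positive whenever `t ≠ 0`.
-/

open Real Set

theorem log_mul_rpow_sub_one_lt {a b t : ℝ} (ha : 1 < a) (hab : a < b) (ht : t ≠ 0) :
    log b * (a ^ t - 1) < log a * (b ^ t - 1) := by
  have ha₀ : 0 < a := by linarith
  have hla : 0 < log a := log_pos ha
  set p := log b / log a with hp_def
  have hp : 1 < p := (one_lt_div hla).2 (log_lt_log ha₀ hab)
  have hlb : log b = log a * p := by rw [hp_def]; field_simp
  have hbt : b ^ t = (a ^ t) ^ p := by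
    rw [← rpow_mul ha₀.le, rpow_def_of_pos ha₀, rpow_def_of_pos (ha₀.trans hab), hlb]
    ring_nf
  have hat : a ^ t ≠ 1 := by
    rw [← rpow_zero a, Ne, rpow_right_inj ha₀ ha.ne']
    exact ht
  have hbern : 1 + p * (a ^ t - 1) < b ^ t := by
    have := one_add_mul_self_lt_rpow_one_add (s := a ^ t - 1)
      (by linarith [rpow_pos_of_pos ha₀ t]) (sub_ne_zero.2 hat) hp
    rwa [add_sub_cancel, ← hbt] at this
  calc log b * (a ^ t - 1) = log a * (p * (a ^ t - 1)) := by rw [hlb]; ring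
    _ < log a * (b ^ t - 1) := by gcongr; linarith

theorem log_rpow_combination_pos {a b x : ℝ} (ha : 1 < a) (hab : a < b) (hx : x ≠ 1) :
    0 < -a * b ^ x * log b + b * a ^ x * log a + (a * b) ^ x * log (b / a) := by
  have ha₀ : 0 < a := by linarith
  have hb₀ : 0 < b := by linarith
  have hkey := log_mul_rpow_sub_one_lt ha hab (sub_ne_zero.2 hx.symm)
  have hax : a ^ x * a ^ (1 - x) = a := by rw [← rpow_add ha₀]; simp
  have hbx : b ^ x * b ^ (1 - x) = b := by rw [← rpow_add hb₀]; simp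
  have hprod : 0 < a ^ x * b ^ x := mul_pos (rpow_pos_of_pos ha₀ x) (rpow_pos_of_pos hb₀ x)
  rw [mul_rpow ha₀.le hb₀.le, log_div hb₀.ne' ha₀.ne']
  have := mul_lt_mul_of_pos_left hkey hprod
  linear_combination this - log b * b ^ x * hax + log a * a ^ x * hbx

noncomputable def rho (y : ℝ) : ℝ :=
  (-7 - (9 : ℝ) ^ y + (4 : ℝ) ^ (y + 1)) / (2 * (4 - (4 : ℝ) ^ y))

noncomputable def rhoDeriv (x : ℝ) : ℝ :=
  (-4 * (9 : ℝ) ^ x * log 9 + 9 * (4 : ℝ) ^ x * log 4 + (36 : ℝ) ^ x * log (9 / 4)) /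
    (2 * (4 - (4 : ℝ) ^ x) ^ 2)

theorem four_sub_four_rpow_ne_zero {x : ℝ} (hx : x ≠ 1) : 4 - (4 : ℝ) ^ x ≠ 0 := by
  intro h
  refine hx ((rpow_right_inj (x := 4) (by norm_num) (by norm_num)).1 ?_)
  rw [rpow_one]
  linarith

theorem rhoDeriv_pos {x : ℝ} (hx : x ≠ 1) : 0 < rhoDeriv x := by
  have hnum := log_rpow_combination_pos (a := 4) (b := 9) (by norm_num) (by norm_num) hx
  have hden : 0 < 2 * (4 - (4 : ℝ) ^ x) ^ 2 := by
    have := four_sub_four_rpow_ne_zero hx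
    positivity
  rw [show (4 : ℝ) * 9 = 36 by norm_num] at hnum
  exact div_pos hnum hden

theorem hasDerivAt_rho {x : ℝ} (hx : x ≠ 1) : HasDerivAt rho (rhoDeriv x) x := by
  have hpow : ∀ c : ℝ, 0 < c → HasDerivAt (fun y : ℝ => c ^ y) (c ^ x * log c) x :=
    fun c hc => (hasStrictDerivAt_const_rpow hc x).hasDerivAt
  have hnum : HasDerivAt (fun y : ℝ => -7 - (9 : ℝ) ^ y + 4 * (4 : ℝ) ^ y)
      (0 - (9 : ℝ) ^ x * log 9 + 4 * ((4 : ℝ) ^ x * log 4)) x :=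
    ((hasDerivAt_const x (-7 : ℝ)).sub (hpow 9 (by norm_num))).add
      ((hpow 4 (by norm_num)).const_mul 4)
  have hden : HasDerivAt (fun y : ℝ => 2 * (4 - (4 : ℝ) ^ y)) (2 * (0 - (4 : ℝ) ^ x * log 4)) x :=
    ((hasDerivAt_const x (4 : ℝ)).sub (hpow 4 (by norm_num))).const_mul 2
  have hne := four_sub_four_rpow_ne_zero hx
  have hrho : rho = fun y => (-7 - (9 : ℝ) ^ y + 4 * (4 : ℝ) ^ y) / (2 * (4 - (4 : ℝ) ^ y)) := by
    funext y
    rw [rho, rpow_add (by norm_num), rpow_one, mul_comm ((4 : ℝ) ^ y)]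
  rw [hrho]
  refine (hnum.div hden (mul_ne_zero two_ne_zero hne)).congr_deriv ?_
  unfold rhoDeriv
  rw [show (36 : ℝ) = 4 * 9 by norm_num, mul_rpow (by norm_num) (by norm_num),
    log_div (by norm_num) (by norm_num)]
  field_simp
  ring

theorem strictMonoOn_rho : StrictMonoOn rho (Iio 1) := by
  refine strictMonoOn_of_deriv_pos (convex_Iio 1)
    (fun x hx => (hasDerivAt_rho hx.ne).continuousAt.continuousWithinAt) fun x hx => ?_
  rw [interior_Iio] at hx
  rw [(hasDerivAt_rho hx.ne).deriv]
  exact rhoDeriv_pos hx.ne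

/-- ρ(x) = (−7 − 9^x + 4^{x+1}) / (2(4 − 4^x)) is strictly increasing on (0,1);
equivalently its derivative (−4·9^x·ln 9 + 9·4^x·ln 4 + 36^x·ln(9/4)) / (2(4 − 4^x)^2)
is strictly positive for every x ∈ (0,1). -/
theorem rho_strictMonoOn_and_deriv_pos :
    StrictMonoOn (fun y : ℝ => (-7 - (9 : ℝ) ^ y + (4 : ℝ) ^ (y + 1)) / (2 * (4 - (4 : ℝ) ^ y)))
      (Set.Ioo (0 : ℝ) 1) ∧
    ∀ x ∈ Set.Ioo (0 : ℝ) 1,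
      0 < (-4 * (9 : ℝ) ^ x * Real.log 9 + 9 * (4 : ℝ) ^ x * Real.log 4
          + (36 : ℝ) ^ x * Real.log (9 / 4)) / (2 * (4 - (4 : ℝ) ^ x) ^ 2) :=
  ⟨strictMonoOn_rho.mono Ioo_subset_Iio_self, fun _ hx => rhoDeriv_pos hx.2.ne⟩
end

section
/- For every real number t, the integral over ℝ of x ↦ cos(t·x) / (π·(1 + x²)) with respect to Lebesgue measure equals exp(−|t|). In other words, the characteristic function of the standard Cauchy distribution is t ↦ e^{−|t|}. -/
/-!
Splitting the Fourier integral of `x ↦ exp (-a|x|)` at `0` into two complex exponential integrals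
gives `𝓕 (exp (-a|·|)) ξ = 2a / (a² + (2πξ)²)`. For `a = 2π` this is exactly the Cauchy density
`1 / (π (1 + ξ²))`, which is integrable, so Fourier inversion at `t / (2π)` recovers `exp (-|t|)`;
since the density is real, the real part of the inverse Fourier integral is the cosine integral.
-/

open Real MeasureTheory Set FourierTransform

lemma integrable_exp_neg_mul_abs {a : ℝ} (ha : 0 < a) :
    Integrable fun x : ℝ => rexp (-a * |x|) := by
  rw [← integrableOn_univ, ← Iic_union_Ioi (a := 0)]
  refine ((integrableOn_exp_mul_Iic ha 0).congr_fun (fun x hx => ?_) measurableSet_Iic).union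
    ((integrableOn_exp_mul_Ioi (neg_neg_of_pos ha) 0).congr_fun (fun x hx => ?_) measurableSet_Ioi)
  · simp [abs_of_nonpos (mem_Iic.mp hx)]
  · simp [abs_of_pos (mem_Ioi.mp hx)]

lemma inv_sub_mul_I_add_inv_add_mul_I {a : ℝ} (ha : 0 < a) (s : ℝ) :
    (a - s * Complex.I)⁻¹ + (a + s * Complex.I)⁻¹ = ((2 * a / (a ^ 2 + s ^ 2) : ℝ) : ℂ) := by
  have hsub : (a - s * Complex.I : ℂ) ≠ 0 := fun h => by simpa [ha.ne'] using congrArg Complex.re h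
  have hadd : (a + s * Complex.I : ℂ) ≠ 0 := fun h => by simpa [ha.ne'] using congrArg Complex.re h
  have hsq : ((a ^ 2 + s ^ 2 : ℝ) : ℂ) ≠ 0 := by exact_mod_cast (by positivity)
  push_cast at hsq ⊢
  field_simp
  linear_combination (2 * a * s ^ 2 : ℂ) * Complex.I_sq

lemma fourier_exp_neg_mul_abs {a : ℝ} (ha : 0 < a) (ξ : ℝ) :
    𝓕 (fun x : ℝ => (rexp (-a * |x|) : ℂ)) ξ = ((2 * a / (a ^ 2 + (2 * π * ξ) ^ 2) : ℝ) : ℂ) := by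
  set b : ℂ := (2 * π * ξ : ℝ) * Complex.I
  have hexp (x : ℝ) : Complex.exp (↑(-2 * π * x * ξ) * Complex.I) • (rexp (-a * |x|) : ℂ) =
      Complex.exp (-a * |x| - b * x) := by
    rw [smul_eq_mul, Complex.ofReal_exp, ← Complex.exp_add]
    congr 1
    simp only [b]
    push_cast
    ring
  have hleft : EqOn (fun x : ℝ => Complex.exp (-a * |x| - b * x))
      (fun x => Complex.exp ((a - b) * x)) (Iic 0) := fun x hx => by
    simp only [abs_of_nonpos (mem_Iic.mp hx)]
    push_cast
    ring_nf
  have hright : EqOn (fun x : ℝ => Complex.exp (-a * |x| - b * x))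
      (fun x => Complex.exp (-(a + b) * x)) (Ioi 0) := fun x hx => by
    simp only [abs_of_pos (mem_Ioi.mp hx)]
    ring_nf
  have hre_left : 0 < (a - b : ℂ).re := by simpa [b] using ha
  have hre_right : (-(a + b) : ℂ).re < 0 := by simpa [b] using ha
  rw [fourier_real_eq_integral_exp_smul]
  simp_rw [hexp]
  rw [← intervalIntegral.integral_Iic_add_Ioi
      ((integrableOn_exp_mul_complex_Iic hre_left 0).congr_fun hleft.symm measurableSet_Iic)
      ((integrableOn_exp_mul_complex_Ioi hre_right 0).congr_fun hright.symm measurableSet_Ioi),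
    setIntegral_congr_fun measurableSet_Iic hleft, setIntegral_congr_fun measurableSet_Ioi hright,
    integral_exp_mul_complex_Iic hre_left, integral_exp_mul_complex_Ioi hre_right]
  convert inv_sub_mul_I_add_inv_add_mul_I ha (2 * π * ξ) using 2
  all_goals simp only [b, Complex.ofReal_zero, mul_zero, Complex.exp_zero, neg_div_neg_eq, one_div]

lemma re_fourierInv_ofReal {f : ℝ → ℝ} (hf : Integrable f) (x : ℝ) :
    (𝓕⁻ (fun ξ => (f ξ : ℂ)) x).re = ∫ ξ, cos (2 * π * x * ξ) * f ξ := by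
  have hint := (Real.fourierIntegral_convergent_iff (-x)).mpr (hf.ofReal (𝕜 := ℂ))
  simp only [inner_neg_right, neg_neg] at hint
  rw [Real.fourierInv_eq, ← RCLike.re_to_complex]
  refine (integral_re hint).symm.trans (integral_congr_ae (.of_forall fun ξ => ?_))
  simp [Circle.smul_def, Real.fourierChar_apply, Complex.exp_re, mul_assoc]

lemma integrable_one_div_mul_one_add_sq (c : ℝ) :
    Integrable fun x : ℝ => 1 / (c * (1 + x ^ 2)) := by
  simpa [div_eq_mul_inv, mul_inv] using integrable_inv_one_add_sq.mul_const c⁻¹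

/-- the characteristic function of the standard Cauchy distribution:
∫ cos(t·x) / (π(1+x²)) dx = e^{−|t|} for every real t. -/
theorem cauchy_characteristic_function (t : ℝ) :
    ∫ x : ℝ, Real.cos (t * x) / (Real.pi * (1 + x ^ 2)) = Real.exp (-|t|) := by
  set g : ℝ → ℂ := fun x => (rexp (-(2 * π) * |x|) : ℂ)
  have hFg : 𝓕 g = fun ξ => ((1 / (π * (1 + ξ ^ 2)) : ℝ) : ℂ) := by
    ext ξ
    rw [fourier_exp_neg_mul_abs two_pi_pos]
    congr 1
    field_simp
  have hinv : 𝓕⁻ (𝓕 g) (t / (2 * π)) = g (t / (2 * π)) :=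
    (integrable_exp_neg_mul_abs two_pi_pos).ofReal.fourierInv_fourier_eq
      (hFg ▸ (integrable_one_div_mul_one_add_sq π).ofReal) (by fun_prop : Continuous g).continuousAt
  calc ∫ x : ℝ, cos (t * x) / (π * (1 + x ^ 2))
      = ∫ ξ : ℝ, cos (2 * π * (t / (2 * π)) * ξ) * (1 / (π * (1 + ξ ^ 2))) := by
        congr 1 with ξ
        field_simp
    _ = (g (t / (2 * π))).re := by
        rw [← hinv, hFg, re_fourierInv_ofReal (integrable_one_div_mul_one_add_sq π)]
    _ = rexp (-|t|) := by
        simp only [g, Complex.ofReal_re, abs_div, abs_of_pos two_pi_pos]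
        field_simp
end

section
/- Fix H ∈ (0,1) and let γ_H(k) = −½(|k−2|^{2H} − 4|k−1|^{2H} + 6|k|^{2H} − 4|k+1|^{2H} + |k+2|^{2H}) for integer k. Then the series Σ_{k=1}^{∞} |γ_H(k)| and Σ_{k=1}^{∞} γ_H(k)² both converge (the sequences k ↦ γ_H(k) and k ↦ γ_H(k)² are summable over k ≥ 1). -/
/-!
For `k ≥ 3`, `γ_H(k)` is `-1/2` times the fourth forward difference of `x ↦ x ^ (2H)` at
`k - 2`. By the mean value theorem applied four times, a fourth difference of a smooth function
is its fourth derivative at an intermediate point, here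
`2H (2H-1) (2H-2) (2H-3) ξ ^ (2H-4)` with `ξ ≥ k - 2`. Hence `|γ_H(k)| = O(k ^ (2H-4))`, and
since `2H - 4 < -2` both series converge by comparison with `p`-series.
-/

open Real Set
open scoped fwdDiff

theorem exists_fwdDiff_iter_eq_of_hasDerivAt {F : ℕ → ℝ → ℝ} {c a : ℝ} (n : ℕ)
    (hF : ∀ i < n, ∀ x ∈ Ioi c, HasDerivAt (F i) (F (i + 1) x) x) (ha : c < a) :
    ∃ ξ ∈ Icc a (a + n), Δ_[1] ^[n] (F 0) a = F n ξ := by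
  induction n generalizing F with
  | zero => exact ⟨a, by simp, rfl⟩
  | succ n ih =>
    obtain ⟨ξ, hξ, hΔ⟩ := ih (F := fun i ↦ Δ_[1] (F i)) fun i hi x hx ↦
      ((hF i (by omega) (x + 1) (mem_Ioi.2 (by linarith [mem_Ioi.1 hx]))).comp_add_const
        x 1).sub (hF i (by omega) x hx)
    have hFn : ∀ x ∈ Ioi c, HasDerivAt (F n) (F (n + 1) x) x := hF n (by omega)
    obtain ⟨η, hη, hslope⟩ := exists_hasDerivAt_eq_slope (F n) (F (n + 1)) (lt_add_one ξ)
      (fun x hx ↦ (hFn x (ha.trans_le (hξ.1.trans hx.1))).continuousAt.continuousWithinAt)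
      (fun x hx ↦ hFn x (ha.trans_le (hξ.1.trans hx.1.le)))
    refine ⟨η, ⟨by linarith [hξ.1, hη.1], by push_cast; linarith [hξ.2, hη.2]⟩, ?_⟩
    rw [Function.iterate_succ_apply, hΔ, hslope, add_sub_cancel_left, div_one]
    rfl

theorem hasDerivAt_descPochhammer_eval_mul_rpow (p : ℝ) (i : ℕ) {x : ℝ} (hx : 0 < x) :
    HasDerivAt (fun y ↦ (descPochhammer ℝ i).eval p * y ^ (p - i))
      ((descPochhammer ℝ (i + 1)).eval p * x ^ (p - (i + 1 : ℕ))) x := by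
  refine ((hasDerivAt_rpow_const (p := p - i) (Or.inl hx.ne')).const_mul
    ((descPochhammer ℝ i).eval p)).congr_deriv ?_
  rw [descPochhammer_succ_eval]
  push_cast
  ring_nf

theorem abs_fwdDiff_iter_rpow_le {p : ℝ} {n : ℕ} (hpn : p ≤ n) {a : ℝ} (ha : 0 < a) :
    |Δ_[1] ^[n] (fun x ↦ x ^ p) a| ≤ |(descPochhammer ℝ n).eval p| * a ^ (p - n) := by
  obtain ⟨ξ, hξ, hΔ⟩ := exists_fwdDiff_iter_eq_of_hasDerivAt
    (F := fun i y ↦ (descPochhammer ℝ i).eval p * y ^ (p - i)) (c := 0) n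
    (fun i _ x hx ↦ hasDerivAt_descPochhammer_eval_mul_rpow p i hx) ha
  have hξ0 : 0 < ξ := ha.trans_le hξ.1
  simp only [descPochhammer_zero, Polynomial.eval_one, one_mul, CharP.cast_eq_zero, sub_zero] at hΔ
  rw [hΔ, abs_mul, abs_of_nonneg (rpow_nonneg hξ0.le _)]
  exact mul_le_mul_of_nonneg_left (rpow_le_rpow_of_nonpos ha hξ.1 (sub_nonpos.2 hpn))
    (abs_nonneg _)

theorem fwdDiff_iter_four_eq {M G : Type*} [AddCommMonoid M] [AddCommGroup G] (h : M)
    (f : M → G) (y : M) :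
    Δ_[h] ^[4] f y =
      f (y + 4 • h) - 4 • f (y + 3 • h) + 6 • f (y + 2 • h) - 4 • f (y + h) + f y := by
  simp only [fwdDiff_iter_eq_sum_shift, Finset.sum_range_succ, Finset.range_one,
    Finset.sum_singleton, Nat.choose, Nat.cast_one, Nat.cast_ofNat, Int.reducePow, Int.reduceNeg,
    Nat.reduceAdd, Nat.reduceSub, Nat.add_one_sub_one, tsub_zero, tsub_self, pow_zero, pow_one,
    one_pow, even_two, Even.neg_pow, neg_mul, one_mul, mul_one, neg_smul, one_smul, zero_nsmul,
    add_zero]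
  abel

theorem summable_of_abs_le_rpow {u : ℕ → ℝ} {C s : ℝ} (hs : s < -1)
    (hu : ∀ k : ℕ, |u k| ≤ C * ((k : ℝ) + 1) ^ s) : Summable u := by
  have hshift : Summable fun k : ℕ ↦ ((k : ℝ) + 1) ^ s := by
    simpa using (summable_nat_add_iff 1).mpr (summable_nat_rpow.mpr hs)
  exact (hshift.mul_left C).of_norm_bounded hu

theorem summable_pow_of_abs_le_rpow {u : ℕ → ℝ} {C s : ℝ} (m : ℕ) (hs : s * m < -1)
    (hu : ∀ k : ℕ, |u k| ≤ C * ((k : ℝ) + 1) ^ s) : Summable fun k ↦ u k ^ m := by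
  refine summable_of_abs_le_rpow (C := C ^ m) hs fun k ↦ ?_
  rw [abs_pow, rpow_mul_natCast (by positivity), ← mul_pow]
  exact pow_le_pow_left₀ (abs_nonneg _) (hu k) m

noncomputable def secondIncrementCov (H : ℝ) (k : ℤ) : ℝ :=
  -((|(k : ℝ) - 2| ^ (2 * H) - 4 * |(k : ℝ) - 1| ^ (2 * H) + 6 * |(k : ℝ)| ^ (2 * H)
    - 4 * |(k : ℝ) + 1| ^ (2 * H) + |(k : ℝ) + 2| ^ (2 * H)) / 2)

theorem secondIncrementCov_natCast_add_three (H : ℝ) (k : ℕ) :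
    secondIncrementCov H ((k : ℤ) + 3) =
      -(Δ_[1] ^[4] (fun x : ℝ ↦ x ^ (2 * H)) ((k : ℝ) + 1)) / 2 := by
  rw [secondIncrementCov, fwdDiff_iter_four_eq]
  push_cast
  rw [show (k : ℝ) + 3 - 2 = k + 1 by ring, show (k : ℝ) + 3 - 1 = k + 1 + 1 by ring,
    show (k : ℝ) + 3 + 1 = k + 1 + 3 by ring, show (k : ℝ) + 3 + 2 = k + 1 + 4 by ring,
    show (k : ℝ) + 3 = k + 1 + 2 by ring]
  have hk : (0 : ℝ) < k + 1 := by positivity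
  rw [abs_of_pos hk, abs_of_pos (by linarith), abs_of_pos (by linarith), abs_of_pos (by linarith),
    abs_of_pos (by linarith)]
  simp only [nsmul_eq_mul, Nat.cast_ofNat, mul_one]
  ring

theorem abs_secondIncrementCov_natCast_add_three_le {H : ℝ} (hH : H ≤ 2) (k : ℕ) :
    |secondIncrementCov H ((k : ℤ) + 3)|
      ≤ |(descPochhammer ℝ 4).eval (2 * H)| / 2 * ((k : ℝ) + 1) ^ (2 * H - 4) := by
  rw [secondIncrementCov_natCast_add_three, abs_div, abs_neg, abs_two, div_mul_eq_mul_div]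
  gcongr
  exact_mod_cast abs_fwdDiff_iter_rpow_le (n := 4) (by push_cast; linarith) (by positivity)

/-- Σ_{k≥1} |γ_H(k)| and Σ_{k≥1} γ_H(k)² both converge. -/
theorem gamma_summable
    (H : ℝ) (hH : H ∈ Set.Ioo (0 : ℝ) 1)
    (γ : ℤ → ℝ)
    (hγ : ∀ k : ℤ, γ k = -((|(k : ℝ) - 2| ^ (2 * H) - 4 * |(k : ℝ) - 1| ^ (2 * H)
        + 6 * |(k : ℝ)| ^ (2 * H) - 4 * |(k : ℝ) + 1| ^ (2 * H)
        + |(k : ℝ) + 2| ^ (2 * H)) / 2)) :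
    Summable (fun k : ℕ => |γ ((k : ℤ) + 1)|) ∧
    Summable (fun k : ℕ => (γ ((k : ℤ) + 1)) ^ 2) := by
  obtain rfl : γ = secondIncrementCov H := funext hγ
  have hbound (k : ℕ) : |secondIncrementCov H (((k + 2 : ℕ) : ℤ) + 1)|
      ≤ |(descPochhammer ℝ 4).eval (2 * H)| / 2 * ((k : ℝ) + 1) ^ (2 * H - 4) := by
    simpa [add_assoc] using abs_secondIncrementCov_natCast_add_three_le (by linarith [hH.2]) k
  constructor
  · rw [← summable_nat_add_iff 2, ← summable_abs_iff]
    exact summable_of_abs_le_rpow (s := 2 * H - 4) (by linarith [hH.2]) (by simpa using hbound)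
  · rw [← summable_nat_add_iff 2]
    exact summable_pow_of_abs_le_rpow 2 (by push_cast; linarith [hH.2]) hbound
end
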